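/- Let P be a continuous probability transition kernel on a finite nonempty alphabet G and let φ_P be its update rule. Then for every finite word s and every u ∈ [0,1) with u < 1 − |G|·η_P(s), the map φ_P(u, ·) is constant on tree(s): for all histories w, z ∈ tree(s), φ_P(u, w) = φ_P(u, z). -/

import Mathlib

open Finset Filter

variable {G : Type*}

/-- The ball of all histories admitting `s` as a suffix.
A history is `w : ℕ → G`, index `i` encoding the symbol `w_{-(i+1)}` (index 0 = most recent).
A word `s : List G` encodes `(s_{-n},…,s_{-1})` with list index `i` = symbol `s_{-(i+1)}`. -/
def tree (s : List G) : Set (ℕ → G) := {w | ∀ i : Fin s.length, w i = s.get i}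

/-- The word `w_{-k:-1}` formed by the last `k` symbols of the history `w`. -/
def word (w : ℕ → G) (k : ℕ) : List G := List.ofFn fun i : Fin k => w i

/-- A probability transition kernel on `G`. -/
def IsKernel [Fintype G] (P : (ℕ → G) → G → ℝ) : Prop :=
  ∀ w, (∀ g, 0 ≤ P w g) ∧ ∑ g, P w g = 1

/-- Total variation distance between distributions on a finite alphabet. -/
noncomputable def tvDist [Fintype G] (p q : G → ℝ) : ℝ := (1 / 2) * ∑ a, |p a - q a|

/-- Oscillation `η_P(s)` of the kernel `P` on the ball `tree s`. -/
noncomputable def eta [Fintype G] (P : (ℕ → G) → G → ℝ) (s : List G) : ℝ :=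
  ⨆ w : tree s, ⨆ z : tree s, tvDist (P w) (P z)

/-- Coupling coefficient `a_{|s|}(g|s)`. -/
noncomputable def aCoef (P : (ℕ → G) → G → ℝ) (g : G) (s : List G) : ℝ :=
  ⨅ w : tree s, P w g

/-- Coupling coefficient `A_{|s|}(s)`. -/
noncomputable def ACoef [Fintype G] (P : (ℕ → G) → G → ℝ) (s : List G) : ℝ :=
  ∑ g, aCoef P g s

/-- `A_k^- = inf { A_k(s) : |s| = k }`. -/
noncomputable def Aminus [Fintype G] (P : (ℕ → G) → G → ℝ) (k : ℕ) : ℝ :=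
  ⨅ s : {s : List G // s.length = k}, ACoef P s.1

/-- Continuity of the kernel: continuity from the product topology (G discrete) to
the total variation distance. -/
def KernelContinuous [Fintype G] (P : (ℕ → G) → G → ℝ) : Prop :=
  ∀ w : ℕ → G, ∀ ε > 0, ∃ k : ℕ, ∀ z : ℕ → G, (∀ i < k, z i = w i) → tvDist (P w) (P z) < ε

/-- `α_k(g | w_{-k:-1})` with the convention `A_{-1}(ε) = a_{-1}(·|ε) = 0`. -/
noncomputable def alphaCoef [Fintype G] [LinearOrder G] (P : (ℕ → G) → G → ℝ)
    (k : ℕ) (g : G) (w : ℕ → G) : ℝ :=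
  (if k = 0 then 0 else ACoef P (word w (k - 1))) +
    ∑ h ∈ univ.filter (fun h => h < g),
      (aCoef P h (word w k) - if k = 0 then 0 else aCoef P h (word w (k - 1)))

/-- `β_k(g | w_{-k:-1})` with the convention `A_{-1}(ε) = a_{-1}(·|ε) = 0`. -/
noncomputable def betaCoef [Fintype G] [LinearOrder G] (P : (ℕ → G) → G → ℝ)
    (k : ℕ) (g : G) (w : ℕ → G) : ℝ :=
  (if k = 0 then 0 else ACoef P (word w (k - 1))) +
    ∑ h ∈ univ.filter (fun h => h ≤ g),
      (aCoef P h (word w k) - if k = 0 then 0 else aCoef P h (word w (k - 1)))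

/-- `φ` is the update rule of `P`: for every `u ∈ [0,1)` and history `w`, `φ u w` is the
(unique) symbol `g` such that `α_k(g|w_{-k:-1}) ≤ u < β_k(g|w_{-k:-1})` for some `k`. -/
def IsUpdateRule [Fintype G] [LinearOrder G] (P : (ℕ → G) → G → ℝ)
    (φ : ℝ → (ℕ → G) → G) : Prop :=
  ∀ u ∈ Set.Ico (0 : ℝ) 1, ∀ w : ℕ → G, ∃ k : ℕ,
    alphaCoef P k (φ u w) w ≤ u ∧ u < betaCoef P k (φ u w) w

/-!
At level `k` the intervals `[α_k(g|w), β_k(g|w))`, `g ∈ G`, tile `[A_{k-1}, A_k)` for the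
prefixes of `w`, and `A_k` is nondecreasing in `k`; so `u` is decided at the first level `k`
with `u < A_k(w_{-k:-1})`. Every coefficient `a(g|s)` is at least `P(g|w) - η(s)`, hence
`A(s) ≥ 1 - |G| η(s) > u`: for `w ∈ tree s` the decision is taken at a level `k ≤ |s|`, where
the intervals only depend on `s`.
-/

lemma mem_tree_word {w z : ℕ → G} {k : ℕ} : z ∈ tree (word w k) ↔ ∀ i < k, z i = w i := by
  refine ⟨fun h i hi => ?_, fun h i => ?_⟩
  · simpa [word] using h ⟨i, by simpa [word] using hi⟩
  · rw [h i (by simpa [word] using i.2)]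
    exact (List.getElem_ofFn (f := fun i : Fin k => w i) _).symm

lemma word_eq_of_mem_tree {s : List G} {w z : ℕ → G} (hw : w ∈ tree s) (hz : z ∈ tree s)
    {k : ℕ} (hk : k ≤ s.length) : word w k = word z k :=
  congrArg List.ofFn <| funext fun i => (hw ⟨i, i.2.trans_le hk⟩).trans (hz ⟨i, _⟩).symm

lemma word_length_eq_of_mem_tree {s : List G} {w : ℕ → G} (hw : w ∈ tree s) :
    word w s.length = s := by
  rw [word, show (fun i : Fin s.length => w i) = s.get from funext hw, List.ofFn_get]

section Kernel

variable [Fintype G] {P : (ℕ → G) → G → ℝ}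

lemma tvDist_le_one (hP : IsKernel P) (w z : ℕ → G) : tvDist (P w) (P z) ≤ 1 := by
  have : ∑ a, |P w a - P z a| ≤ ∑ a, (P w a + P z a) :=
    sum_le_sum fun a _ => (abs_sub _ _).trans <| by
      rw [abs_of_nonneg ((hP w).1 a), abs_of_nonneg ((hP z).1 a)]
  rw [sum_add_distrib, (hP w).2, (hP z).2] at this
  unfold tvDist
  linarith

lemma sub_le_tvDist {p q : G → ℝ} (h : ∑ a, p a = ∑ a, q a) (g : G) :
    p g - q g ≤ tvDist p q := by
  classical
  have hsum : (p g - q g) + ∑ a ∈ univ.erase g, (p a - q a) = 0 := by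
    rw [add_sum_erase univ (fun a => p a - q a) (mem_univ g), sum_sub_distrib, h, sub_self]
  have habs : |p g - q g| + ∑ a ∈ univ.erase g, |p a - q a| = ∑ a, |p a - q a| :=
    add_sum_erase univ (fun a => |p a - q a|) (mem_univ g)
  have hneg : -∑ a ∈ univ.erase g, (p a - q a) ≤ ∑ a ∈ univ.erase g, |p a - q a| := by
    rw [← sum_neg_distrib]
    exact sum_le_sum fun a _ => neg_le_abs _
  unfold tvDist
  linarith [le_abs_self (p g - q g)]

lemma tvDist_le_eta (hP : IsKernel P) {s : List G} {w z : ℕ → G}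
    (hw : w ∈ tree s) (hz : z ∈ tree s) : tvDist (P w) (P z) ≤ eta P s := by
  have hrow : BddAbove (Set.range fun z' : tree s => tvDist (P w) (P z')) :=
    ⟨1, by rintro _ ⟨z', rfl⟩; exact tvDist_le_one hP _ _⟩
  have hrows : BddAbove (Set.range fun w' : tree s => ⨆ z' : tree s, tvDist (P w') (P z')) :=
    ⟨1, by rintro _ ⟨w', rfl⟩; exact Real.iSup_le (fun _ => tvDist_le_one hP _ _) zero_le_one⟩
  calc tvDist (P w) (P z) ≤ ⨆ z' : tree s, tvDist (P w) (P z') := le_ciSup hrow ⟨z, hz⟩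
    _ ≤ eta P s := le_ciSup hrows ⟨w, hw⟩

lemma aCoef_nonneg (hP : IsKernel P) (g : G) (s : List G) : 0 ≤ aCoef P g s :=
  Real.iInf_nonneg fun w => (hP w).1 g

lemma aCoef_le_apply (hP : IsKernel P) (g : G) {s : List G} {w : ℕ → G} (hw : w ∈ tree s) :
    aCoef P g s ≤ P w g :=
  ciInf_le (f := fun v : tree s => P v g) ⟨0, by rintro _ ⟨v, rfl⟩; exact (hP v).1 g⟩ ⟨w, hw⟩

lemma apply_sub_eta_le_aCoef (hP : IsKernel P) {s : List G} {w : ℕ → G} (hw : w ∈ tree s)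
    (g : G) : P w g - eta P s ≤ aCoef P g s := by
  have : Nonempty (tree s) := ⟨⟨w, hw⟩⟩
  refine le_ciInf fun v => ?_
  linarith [sub_le_tvDist ((hP w).2.trans (hP v).2.symm) g, tvDist_le_eta hP hw v.2]

lemma one_sub_card_mul_eta_le_ACoef (hP : IsKernel P) {s : List G} {w : ℕ → G}
    (hw : w ∈ tree s) : 1 - Fintype.card G * eta P s ≤ ACoef P s := by
  calc 1 - Fintype.card G * eta P s = ∑ g, (P w g - eta P s) := by
        rw [sum_sub_distrib, (hP w).2, sum_const, card_univ, nsmul_eq_mul]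
    _ ≤ ACoef P s := sum_le_sum fun g _ => apply_sub_eta_le_aCoef hP hw g

lemma aCoef_word_mono (hP : IsKernel P) (w : ℕ → G) (g : G) :
    Monotone fun k => aCoef P g (word w k) := fun k m hkm => by
  have : Nonempty (tree (word w m)) := ⟨⟨w, mem_tree_word.2 fun _ _ => rfl⟩⟩
  refine le_ciInf fun z => aCoef_le_apply hP g <| mem_tree_word.2 fun i hi =>
    mem_tree_word.1 z.2 i (hi.trans_le hkm)

lemma ACoef_word_mono (hP : IsKernel P) (w : ℕ → G) : Monotone fun k => ACoef P (word w k) :=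
  fun _ _ hkm => sum_le_sum fun g _ => aCoef_word_mono hP w g hkm

/-- `A_{k-1}(w_{-k+1:-1})`, the left end of the level-`k` intervals. -/
noncomputable def ACoefPrev (P : (ℕ → G) → G → ℝ) (k : ℕ) (w : ℕ → G) : ℝ :=
  if k = 0 then 0 else ACoef P (word w (k - 1))

/-- `a_k(h|w_{-k:-1}) - a_{k-1}(h|w_{-k+1:-1})`, the length of the level-`k` interval of `h`. -/
noncomputable def aCoefIncr (P : (ℕ → G) → G → ℝ) (k : ℕ) (h : G) (w : ℕ → G) : ℝ :=
  aCoef P h (word w k) - if k = 0 then 0 else aCoef P h (word w (k - 1))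

lemma aCoefIncr_nonneg (hP : IsKernel P) (k : ℕ) (h : G) (w : ℕ → G) :
    0 ≤ aCoefIncr P k h w := by
  rcases k with _ | k
  · simpa [aCoefIncr] using aCoef_nonneg hP h (word w 0)
  · simpa [aCoefIncr] using aCoef_word_mono hP w h k.le_succ

lemma ACoefPrev_add_sum_aCoefIncr (k : ℕ) (w : ℕ → G) :
    ACoefPrev P k w + ∑ h, aCoefIncr P k h w = ACoef P (word w k) := by
  rcases k with _ | k <;> simp [ACoefPrev, aCoefIncr, ACoef, sum_sub_distrib]

end Kernel

section UpdateRule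

variable [Fintype G] [LinearOrder G] {P : (ℕ → G) → G → ℝ}

lemma alphaCoef_eq (k : ℕ) (g : G) (w : ℕ → G) :
    alphaCoef P k g w = ACoefPrev P k w + ∑ h ∈ univ.filter (· < g), aCoefIncr P k h w :=
  rfl

lemma betaCoef_eq (k : ℕ) (g : G) (w : ℕ → G) :
    betaCoef P k g w = ACoefPrev P k w + ∑ h ∈ univ.filter (· ≤ g), aCoefIncr P k h w :=
  rfl

lemma ACoefPrev_le_alphaCoef (hP : IsKernel P) (k : ℕ) (g : G) (w : ℕ → G) :
    ACoefPrev P k w ≤ alphaCoef P k g w :=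
  le_add_of_nonneg_right <| sum_nonneg fun h _ => aCoefIncr_nonneg hP k h w

lemma betaCoef_le_ACoef (hP : IsKernel P) (k : ℕ) (g : G) (w : ℕ → G) :
    betaCoef P k g w ≤ ACoef P (word w k) := by
  rw [betaCoef_eq, ← ACoefPrev_add_sum_aCoefIncr]
  gcongr
  · exact fun h _ _ => aCoefIncr_nonneg hP k h w
  · exact filter_subset _ _

lemma betaCoef_le_alphaCoef_of_lex_lt (hP : IsKernel P) (w : ℕ → G) {k k' : ℕ} {g g' : G}
    (hlt : toLex (k, g) < toLex (k', g')) : betaCoef P k g w ≤ alphaCoef P k' g' w := by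
  obtain hk | ⟨rfl, hg⟩ : k < k' ∨ k = k' ∧ g < g' := Prod.Lex.toLex_lt_toLex.1 hlt
  · calc betaCoef P k g w ≤ ACoef P (word w k) := betaCoef_le_ACoef hP k g w
      _ ≤ ACoef P (word w (k' - 1)) := ACoef_word_mono hP w (Nat.le_sub_one_of_lt hk)
      _ = ACoefPrev P k' w := (if_neg (by omega)).symm
      _ ≤ alphaCoef P k' g' w := ACoefPrev_le_alphaCoef hP k' g' w
  · rw [betaCoef_eq, alphaCoef_eq]
    gcongr
    exact fun h _ _ => aCoefIncr_nonneg hP k h w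

lemma eq_of_mem_Ico_alphaCoef_betaCoef (hP : IsKernel P) (w : ℕ → G) {u : ℝ}
    {k k' : ℕ} {g g' : G} (h : u ∈ Set.Ico (alphaCoef P k g w) (betaCoef P k g w))
    (h' : u ∈ Set.Ico (alphaCoef P k' g' w) (betaCoef P k' g' w)) : g = g' := by
  rcases lt_trichotomy (toLex (k, g)) (toLex (k', g')) with hlt | heq | hlt
  · linarith [h.2, h'.1, betaCoef_le_alphaCoef_of_lex_lt hP w hlt]
  · exact (Prod.ext_iff.1 (toLex.injective heq)).2
  · linarith [h.1, h'.2, betaCoef_le_alphaCoef_of_lex_lt hP w hlt]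

lemma le_length_of_alphaCoef_le (hP : IsKernel P) {s : List G} {w : ℕ → G} (hw : w ∈ tree s)
    {u : ℝ} (hu : u < ACoef P s) {k : ℕ} {g : G} (hα : alphaCoef P k g w ≤ u) :
    k ≤ s.length := by
  by_contra! hk
  have : ACoef P s ≤ ACoefPrev P k w := by
    rw [ACoefPrev, if_neg (by omega), ← word_length_eq_of_mem_tree hw]
    exact ACoef_word_mono hP w (by omega)
  linarith [ACoefPrev_le_alphaCoef hP k g w]

lemma alphaCoef_congr {s : List G} {w z : ℕ → G} (hw : w ∈ tree s) (hz : z ∈ tree s)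
    {k : ℕ} (hk : k ≤ s.length) (g : G) : alphaCoef P k g w = alphaCoef P k g z := by
  simp only [alphaCoef, word_eq_of_mem_tree hw hz hk,
    word_eq_of_mem_tree hw hz ((k.sub_le 1).trans hk)]

lemma betaCoef_congr {s : List G} {w z : ℕ → G} (hw : w ∈ tree s) (hz : z ∈ tree s)
    {k : ℕ} (hk : k ≤ s.length) (g : G) : betaCoef P k g w = betaCoef P k g z := by
  simp only [betaCoef, word_eq_of_mem_tree hw hz hk,
    word_eq_of_mem_tree hw hz ((k.sub_le 1).trans hk)]

end UpdateRule

theorem stmt_5_general [Fintype G] [LinearOrder G] (P : (ℕ → G) → G → ℝ)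
    (hP : IsKernel P)
    (φ : ℝ → (ℕ → G) → G) (hφ : IsUpdateRule P φ) :
    ∀ s : List G, ∀ u ∈ Set.Ico (0 : ℝ) 1, u < 1 - (Fintype.card G : ℝ) * eta P s →
      ∀ w ∈ tree s, ∀ z ∈ tree s, φ u w = φ u z := by
  intro s u hu hlt w hw z hz
  obtain ⟨k, hαw, hβw⟩ := hφ u hu w
  obtain ⟨k', hαz, hβz⟩ := hφ u hu z
  have hk' : k' ≤ s.length :=
    le_length_of_alphaCoef_le hP hz (hlt.trans_le (one_sub_card_mul_eta_le_ACoef hP hw)) hαz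
  rw [alphaCoef_congr hz hw hk'] at hαz
  rw [betaCoef_congr hz hw hk'] at hβz
  exact eq_of_mem_Ico_alphaCoef_betaCoef hP w ⟨hαw, hβw⟩ ⟨hαz, hβz⟩

/-- Equation (1): the update rule `φ_P` of a continuous kernel `P` satisfies: for every
word `s` and every `u ∈ [0,1)` with `u < 1 - |G|·η_P(s)`, `φ_P(u, ·)` is constant on
`tree s`. -/
theorem stmt_5 [Fintype G] [Nonempty G] [LinearOrder G] (P : (ℕ → G) → G → ℝ)
    (hP : IsKernel P) (hc : KernelContinuous P)
    (φ : ℝ → (ℕ → G) → G) (hφ : IsUpdateRule P φ) :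
    ∀ s : List G, ∀ u ∈ Set.Ico (0 : ℝ) 1, u < 1 - (Fintype.card G : ℝ) * eta P s →
      ∀ w ∈ tree s, ∀ z ∈ tree s, φ u w = φ u z :=
  stmt_5_general P hP φ hφ
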